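/- arXiv:2301.12162 — 2 statements merged into one kernel-verified Lean document; each statement's English description precedes it below -/
import Mathlib

section
/- The constraint set P = {x ∈ {0,1}^N : x[t] ≥ x[t−1] − x[t−2] and x[t] ≥ x[t−1] − x[t−3] for all 1 ≤ t ≤ N+2, with x[t] := 0 for t < 1 and t > N} equals the set of binary sequences in which every maximal run of consecutive ones has length at least 3. -/
/-!
For binary values the two inequalities at `t` say exactly that whenever a run of ones ends at
`t - 1` (that is, `x (t - 1) = 1` and `x t = 0`), the two preceding entries are ones as well,
i.e. the run has length at least three.
-/

lemma binary_constraint_iff {a b c d : ℤ} (ha : a = 0 ∨ a = 1) (hb : b = 0 ∨ b = 1)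
    (hc : c = 0 ∨ c = 1) (hd : d = 0 ∨ d = 1) :
    (b - c ≤ a ∧ b - d ≤ a) ↔ (b = 1 → a = 0 → c = 1 ∧ d = 1) := by
  omega

lemma run_end_preceded_by_two_ones {N : ℕ} {x : ℤ → ℤ}
    (hbin : ∀ t, x t = 0 ∨ x t = 1)
    (hzero : ∀ t : ℤ, (t < 1 ∨ (N : ℤ) < t) → x t = 0)
    (hruns : ∀ a b : ℤ, 1 ≤ a → b ≤ (N : ℤ) → a ≤ b →
        (∀ t, a ≤ t → t ≤ b → x t = 1) →
        x (a - 1) = 0 → x (b + 1) = 0 →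
        3 ≤ b - a + 1)
    {t : ℤ} (hend : x (t - 1) = 1) (hnext : x t = 0) :
    x (t - 2) = 1 ∧ x (t - 3) = 1 := by
  have hsupp : ∀ s, x s = 1 → 1 ≤ s ∧ s ≤ N := fun s hs => by
    by_contra hout
    have := hzero s (by omega)
    omega
  have hnext' : x (t - 1 + 1) = 0 := by rwa [sub_add_cancel]
  have h2 : x (t - 2) = 1 := by
    refine (hbin (t - 2)).resolve_left fun h2 => ?_
    have := hruns (t - 1) (t - 1) (hsupp _ hend).1 (hsupp _ hend).2 le_rfl
      (fun s hs hs' => le_antisymm hs' hs ▸ hend) (by rwa [sub_sub, one_add_one_eq_two]) hnext'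
    omega
  refine ⟨h2, (hbin (t - 3)).resolve_left fun h3 => ?_⟩
  have := hruns (t - 2) (t - 1) (hsupp _ h2).1 (hsupp _ hend).2 (by omega)
    (fun s hs hs' => by
      obtain rfl | rfl : s = t - 2 ∨ s = t - 1 := by omega
      exacts [h2, hend])
    (by rwa [show t - 2 - 1 = t - 3 by ring]) hnext'
  omega

/-- The constraint set
`P = {x : x[t] ≥ x[t−1] − x[t−2] and x[t] ≥ x[t−1] − x[t−3], 1 ≤ t ≤ N+2}`
(for a binary sequence extended by zeros outside `{1, …, N}`) equals the set
of binary sequences in which every maximal run of consecutive ones has length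
at least 3. -/
theorem constraint_iff_runs_ge_three (N : ℕ) (x : ℤ → ℤ)
    (hbin : ∀ t, x t = 0 ∨ x t = 1)
    (hzero : ∀ t : ℤ, (t < 1 ∨ (N : ℤ) < t) → x t = 0) :
    (∀ t : ℤ, 1 ≤ t → t ≤ (N : ℤ) + 2 →
        x (t - 1) - x (t - 2) ≤ x t ∧ x (t - 1) - x (t - 3) ≤ x t) ↔
    (∀ a b : ℤ, 1 ≤ a → b ≤ (N : ℤ) → a ≤ b →
        (∀ t, a ≤ t → t ≤ b → x t = 1) →
        x (a - 1) = 0 → x (b + 1) = 0 →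
        3 ≤ b - a + 1) := by
  simp only [binary_constraint_iff (hbin _) (hbin _) (hbin _) (hbin _)]
  constructor
  · intro hconstr a b ha hb hab hrun ha0 hb0
    obtain ⟨h1, h2⟩ := hconstr (b + 1) (by omega) (by omega)
      (by rw [add_sub_cancel_right]; exact hrun b hab le_rfl) hb0
    by_contra hshort
    -- `a - 1` would be `b - 1` or `b - 2`, which the constraint at `b + 1` forces to be a one.
    rcases (by omega : b = a ∨ b = a + 1) with rfl | rfl <;> grind
  · intro hruns t _ _
    exact run_end_preceded_by_two_ones hbin hzero hruns
end

section
/- Correctness of the constructive TT indicator: the tensor built from the derivative functions defined by f^k_0(s) = 0 if s = 0 or s = l and undefined (forcing value 0) otherwise, f^k_1(s) = min(l, s+1) for k < d, and terminal functions f^d_0(s) = 1 if s ∈ {0,l} else 0, f^d_1(s) = 1 if s ≥ l−1 else 0, equals 1 on a binary sequence x ∈ {0,1}^d if and only if every maximal run of consecutive ones in x has length at least l, and equals 0 otherwise. -/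
/-- One step of the automaton underlying the constructive TT indicator: the
state `s ∈ {0, …, l}` counts the current run of ones (capped at `l`);
`none` is the absorbing failure state `⊥`. -/
def indStep (l : ℕ) (s : Option ℕ) (b : Bool) : Option ℕ :=
  if b then s.map (fun v => min l (v + 1))
  else s.bind (fun v => if v = 0 ∨ v = l then some 0 else none)

/-- The state `s_k` after processing `x 1, …, x k` (initial state `s_0 = 0`). -/
def indState (l : ℕ) (x : ℤ → Bool) : ℕ → Option ℕ
  | 0 => some 0
  | k + 1 => indStep l (indState l x k) (x ((k : ℤ) + 1))

/-- The value of the constructive TT indicator tensor on `x`, using the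
terminal derivative functions `f^d_0` and `f^d_1`. -/
def indTensor (l d : ℕ) (x : ℤ → Bool) : ℝ :=
  match indState l x (d - 1) with
  | none => 0
  | some s =>
      if x (d : ℤ) then (if l - 1 ≤ s then 1 else 0)
      else (if s = 0 ∨ s = l then 1 else 0)

def runLen (x : ℤ → Bool) : ℕ → ℕ
  | 0 => 0
  | k + 1 => if x ((k : ℤ) + 1) then runLen x k + 1 else 0

lemma runLen_ones (x : ℤ → Bool) : ∀ k : ℕ, ∀ t : ℤ,
    (k : ℤ) - runLen x k < t → t ≤ k → x t = true := by
  intro k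
  induction k with
  | zero => intro t h1 h2; simp [runLen] at h1; omega
  | succ k ih =>
    intro t h1 h2
    by_cases hx : x ((k : ℤ) + 1) = true
    · rw [runLen, if_pos hx] at h1
      rcases eq_or_lt_of_le h2 with h | h
      · push_cast at h; rw [h]; exact hx
      · exact ih t (by push_cast at h1 ⊢; omega) (by omega)
    · rw [runLen, if_neg hx] at h1
      push_cast at h1; omega

lemma runLen_before (x : ℤ → Bool) (hz : ∀ t : ℤ, t < 1 → x t = false) :
    ∀ k : ℕ, x ((k : ℤ) - runLen x k) = false := by
  intro k
  induction k with
  | zero => simpa [runLen] using hz 0 (by omega)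
  | succ k ih =>
    by_cases hx : x ((k : ℤ) + 1) = true
    · rw [runLen, if_pos hx,
        show ((k + 1 : ℕ) : ℤ) - ((runLen x k + 1 : ℕ) : ℤ) = (k : ℤ) - (runLen x k : ℕ) by
          push_cast; ring]
      exact ih
    · rw [runLen, if_neg hx]
      simpa using eq_false_of_ne_true hx

lemma runLen_eq (x : ℤ → Bool) (hz : ∀ t : ℤ, t < 1 → x t = false) (k m : ℕ)
    (hones : ∀ t : ℤ, (k : ℤ) - m < t → t ≤ k → x t = true)
    (hb : x ((k : ℤ) - m) = false) : runLen x k = m := by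
  rcases lt_trichotomy (runLen x k) m with h | h | h
  · have := runLen_before x hz k
    have h2 := hones ((k : ℤ) - runLen x k) (by omega) (by omega)
    rw [this] at h2; exact absurd h2 (by simp)
  · exact h
  · have h2 := runLen_ones x k ((k : ℤ) - m) (by omega) (by omega)
    rw [hb] at h2; exact absurd h2 (by simp)

def Bad (l : ℕ) (x : ℤ → Bool) (k : ℕ) : Prop :=
  ∃ j : ℕ, j < k ∧ x ((j : ℤ) + 1) = false ∧ 0 < runLen x j ∧ runLen x j < l

lemma state_spec (l : ℕ) (x : ℤ → Bool) (hl : 1 ≤ l) : ∀ k : ℕ,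
    (Bad l x k → indState l x k = none) ∧
    (¬ Bad l x k → indState l x k = some (min l (runLen x k))) := by
  intro k
  induction k with
  | zero =>
    constructor
    · rintro ⟨j, hj, -⟩; omega
    · intro _; simp [indState, runLen]
  | succ k ih =>
    by_cases hx : x ((k : ℤ) + 1) = true
    · have hbadiff : Bad l x (k + 1) ↔ Bad l x k := by
        constructor
        · rintro ⟨j, hj, hxj, h1, h2⟩
          refine ⟨j, ?_, hxj, h1, h2⟩
          rcases Nat.lt_succ_iff_lt_or_eq.mp hj with h | h
          · exact h
          · subst h; rw [hx] at hxj; exact absurd hxj (by simp)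
        · rintro ⟨j, hj, hxj, h1, h2⟩; exact ⟨j, by omega, hxj, h1, h2⟩
      by_cases hbk : Bad l x k
      · have hs := ih.1 hbk
        constructor
        · intro _; simp [indState, indStep, hs, hx]
        · intro h; exact absurd (hbadiff.mpr hbk) h
      · have hs := ih.2 hbk
        constructor
        · intro h; exact absurd (hbadiff.mp h) hbk
        · intro _
          have hstep : indState l x (k + 1) = some (min l (min l (runLen x k) + 1)) := by
            rw [indState, hs, indStep, if_pos hx, Option.map_some]
          rw [hstep, runLen, if_pos hx]
          congr 1
          omega
    · have hxf : ¬ (x ((k : ℤ) + 1) = true) := hx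
      have hrl : runLen x (k + 1) = 0 := by rw [runLen, if_neg hx]
      by_cases hbk : Bad l x k
      · have hs := ih.1 hbk
        have hnone : indState l x (k + 1) = none := by
          rw [indState, hs, indStep, if_neg hxf, Option.bind_none]
        have hb1 : Bad l x (k + 1) := by
          obtain ⟨j, hj, h⟩ := hbk; exact ⟨j, by omega, h⟩
        exact ⟨fun _ => hnone, fun h => absurd hb1 h⟩
      · have hs := ih.2 hbk
        have hstep : indState l x (k + 1) =
            if min l (runLen x k) = 0 ∨ min l (runLen x k) = l then some 0 else none := by
          rw [indState, hs, indStep, if_neg hxf, Option.bind_some]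
        by_cases hr : 0 < runLen x k ∧ runLen x k < l
        · refine ⟨fun _ => ?_,
            fun h => absurd ⟨k, by omega, eq_false_of_ne_true hx, hr.1, hr.2⟩ h⟩
          rw [hstep, if_neg (by omega)]
        · refine ⟨?_, fun _ => ?_⟩
          · rintro ⟨j, hj, hxj, h1, h2⟩
            rcases Nat.lt_succ_iff_lt_or_eq.mp hj with h | h
            · exact absurd ⟨j, h, hxj, h1, h2⟩ hbk
            · subst h; exact absurd (And.intro h1 h2) hr
          · rw [hstep, if_pos (by omega), hrl]
            simp

lemma indTensor_mem (l d : ℕ) (x : ℤ → Bool) :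
    indTensor l d x = 0 ∨ indTensor l d x = 1 := by
  unfold indTensor
  rcases indState l x (d - 1) with _ | s
  · left; rfl
  · dsimp only
    split <;> split <;> simp

lemma indTensor_none (l d : ℕ) (x : ℤ → Bool) (h : indState l x (d - 1) = none) :
    indTensor l d x = 0 := by
  unfold indTensor; rw [h]

lemma indTensor_some (l d : ℕ) (x : ℤ → Bool) (s : ℕ) (h : indState l x (d - 1) = some s) :
    indTensor l d x = if x (d : ℤ) then (if l - 1 ≤ s then (1:ℝ) else 0)
      else (if s = 0 ∨ s = l then 1 else 0) := by
  unfold indTensor; rw [h]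

/-- Correctness of the constructive TT indicator: on a binary sequence `x`
(extended by zeros outside `{1, …, d}`), the tensor equals `1` iff every
maximal run of consecutive ones has length at least `l`, and equals `0`
otherwise. -/
theorem indTensor_correct (l d : ℕ) (hl : 1 ≤ l) (hd : 1 ≤ d)
    (x : ℤ → Bool)
    (hzero : ∀ t : ℤ, (t < 1 ∨ (d : ℤ) < t) → x t = false) :
    (indTensor l d x = 1 ↔
      (∀ a b : ℤ, 1 ≤ a → b ≤ (d : ℤ) → a ≤ b →
        (∀ t, a ≤ t → t ≤ b → x t = true) →
        x (a - 1) = false → x (b + 1) = false →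
        (l : ℤ) ≤ b - a + 1)) ∧
    (¬ (∀ a b : ℤ, 1 ≤ a → b ≤ (d : ℤ) → a ≤ b →
        (∀ t, a ≤ t → t ≤ b → x t = true) →
        x (a - 1) = false → x (b + 1) = false →
        (l : ℤ) ≤ b - a + 1) → indTensor l d x = 0) := by
  have hz : ∀ t : ℤ, t < 1 → x t = false := fun t ht => hzero t (Or.inl ht)
  obtain ⟨e, rfl⟩ : ∃ e, d = e + 1 := ⟨d - 1, by omega⟩
  have hde : (e + 1) - 1 = e := by omega
  have hcast : ((e + 1 : ℕ) : ℤ) = (e : ℤ) + 1 := by push_cast; ring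
  have key : indTensor l (e + 1) x = 1 ↔
      (∀ a b : ℤ, 1 ≤ a → b ≤ ((e + 1 : ℕ) : ℤ) → a ≤ b →
        (∀ t, a ≤ t → t ≤ b → x t = true) →
        x (a - 1) = false → x (b + 1) = false →
        (l : ℤ) ≤ b - a + 1) := by
    constructor
    · -- tensor = 1 → P
      intro h1 a b ha hb hab hones hfa hfb
      have hnb : ¬ Bad l x e := by
        intro hb'
        have hst := (state_spec l x hl e).1 hb'
        rw [indTensor_none l (e + 1) x (by rw [hde]; exact hst)] at h1
        norm_num at h1
      have hs := (state_spec l x hl e).2 hnb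
      rw [indTensor_some l (e + 1) x _ (by rw [hde]; exact hs)] at h1
      have hmz : ((b - a + 1).toNat : ℤ) = b - a + 1 := by omega
      set m := (b - a + 1).toNat with hm
      have hm1 : 1 ≤ m := by omega
      rcases eq_or_lt_of_le hb with hbd | hbd
      · -- b = e + 1
        have hxd : x (((e + 1 : ℕ)) : ℤ) = true := by
          rw [← hbd]; exact hones b hab le_rfl
        rw [if_pos hxd] at h1
        have hcond : l - 1 ≤ min l (runLen x e) := by
          by_contra hc; rw [if_neg hc] at h1; norm_num at h1
        have hrun : runLen x (e + 1) = m := by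
          apply runLen_eq x hz
          · intro t h1t h2t; apply hones <;> omega
          · rw [show ((e + 1 : ℕ) : ℤ) - m = a - 1 by omega]; exact hfa
        have hstep : runLen x (e + 1) = runLen x e + 1 := by
          rw [runLen, if_pos (by rw [← hcast]; exact hxd)]
        omega
      · -- b ≤ e
        rcases eq_or_lt_of_le (show b ≤ (e : ℤ) by omega) with hbe | hbe
        · -- b = e
          have hxd : x (((e + 1 : ℕ)) : ℤ) = false := by
            rw [show ((e + 1 : ℕ) : ℤ) = b + 1 by omega]; exact hfb
          rw [if_neg (by rw [hxd]; simp)] at h1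
          have hrun : runLen x e = m := by
            apply runLen_eq x hz
            · intro t h1t h2t; apply hones <;> omega
            · rw [show ((e : ℕ) : ℤ) - m = a - 1 by omega]; exact hfa
          have hcond : min l (runLen x e) = 0 ∨ min l (runLen x e) = l := by
            by_contra hc; rw [if_neg hc] at h1; norm_num at h1
          omega
        · -- b ≤ e - 1
          have hj : ((b.toNat : ℕ) : ℤ) = b := by omega
          set j := b.toNat with hjdef
          have hrun : runLen x j = m := by
            apply runLen_eq x hz
            · intro t h1t h2t; apply hones <;> omega
            · rw [show ((j : ℕ) : ℤ) - m = a - 1 by omega]; exact hfa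
          have hxj : x ((j : ℤ) + 1) = false := by
            rw [show (j : ℤ) + 1 = b + 1 by omega]; exact hfb
          by_contra hc
          exact hnb ⟨j, by omega, hxj, by omega, by omega⟩
    · -- P → tensor = 1
      intro hP
      have hnb : ¬ Bad l x e := by
        rintro ⟨j, hj, hxj, h1, h2⟩
        have hones := runLen_ones x j
        have hbef := runLen_before x hz j
        set r := runLen x j with hr
        have ha1 : (1 : ℤ) ≤ (j : ℤ) - r + 1 := by
          by_contra hc
          have hx1 := hones ((j : ℤ) - r + 1) (by omega) (by omega)
          rw [hz ((j : ℤ) - r + 1) (by omega)] at hx1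
          simp at hx1
        have hbef' : x (((j : ℤ) - r + 1) - 1) = false := by
          rw [show ((j : ℤ) - r + 1) - 1 = (j : ℤ) - r by ring]; exact hbef
        have hge := hP ((j : ℤ) - r + 1) (j : ℤ) ha1 (by omega) (by omega)
          (fun t h1t h2t => hones t (by omega) h2t) hbef' hxj
        omega
      have hs := (state_spec l x hl e).2 hnb
      rw [indTensor_some l (e + 1) x _ (by rw [hde]; exact hs)]
      by_cases hxd : x (((e + 1 : ℕ)) : ℤ) = true
      · rw [if_pos hxd]
        have hstep : runLen x (e + 1) = runLen x e + 1 := by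
          rw [runLen, if_pos (by rw [← hcast]; exact hxd)]
        have hones := runLen_ones x (e + 1)
        have hbef := runLen_before x hz (e + 1)
        set r := runLen x (e + 1) with hr
        have ha1 : (1 : ℤ) ≤ ((e + 1 : ℕ) : ℤ) - r + 1 := by
          by_contra hc
          have hx1 := hones (((e + 1 : ℕ) : ℤ) - r + 1) (by omega) (by omega)
          rw [hz (((e + 1 : ℕ) : ℤ) - r + 1) (by omega)] at hx1
          simp at hx1
        have hbef' : x ((((e + 1 : ℕ) : ℤ) - r + 1) - 1) = false := by
          rw [show (((e + 1 : ℕ) : ℤ) - r + 1) - 1 = ((e + 1 : ℕ) : ℤ) - r by ring]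
          exact hbef
        have hlast : x (((e + 1 : ℕ) : ℤ) + 1) = false := hzero _ (Or.inr (by omega))
        have hge := hP (((e + 1 : ℕ) : ℤ) - r + 1) ((e + 1 : ℕ) : ℤ) ha1 le_rfl (by omega)
          (fun t h1t h2t => hones t (by omega) h2t) hbef' hlast
        rw [if_pos (by omega)]
      · rw [if_neg hxd]
        have hxdf : x ((e : ℤ) + 1) = false := by
          rw [← hcast]; exact eq_false_of_ne_true hxd
        rcases Nat.eq_zero_or_pos (runLen x e) with h0 | h0
        · rw [if_pos (by omega)]
        · have hones := runLen_ones x e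
          have hbef := runLen_before x hz e
          set r := runLen x e with hr
          have ha1 : (1 : ℤ) ≤ (e : ℤ) - r + 1 := by
            by_contra hc
            have hx1 := hones ((e : ℤ) - r + 1) (by omega) (by omega)
            rw [hz ((e : ℤ) - r + 1) (by omega)] at hx1
            simp at hx1
          have hbef' : x (((e : ℤ) - r + 1) - 1) = false := by
            rw [show ((e : ℤ) - r + 1) - 1 = (e : ℤ) - r by ring]; exact hbef
          have hge := hP ((e : ℤ) - r + 1) (e : ℤ) ha1 (by omega) (by omega)
            (fun t h1t h2t => hones t (by omega) h2t) hbef' hxdf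
          rw [if_pos (by omega)]
  refine ⟨key, fun hP => ?_⟩
  rcases indTensor_mem l (e + 1) x with h | h
  · exact h
  · exact absurd (key.mp h) hP
end
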